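/- arXiv:1210.4336 — 3 statements merged into one kernel-verified Lean document; each statement's English description precedes it below -/
import Mathlib

section
/- Let (F, v) be a valued field with values in a linearly ordered commutative group with zero Γ₀, and let r ∈ Γ₀. Define w_r : F[X] → Γ₀ by w_r(Σᵢ aᵢ Xⁱ) = max over i of v(aᵢ)·rⁱ (with w_r(0) = 0). Then w_r is a valuation on the polynomial ring F[X]: w_r(0) = 0, w_r(1) = 1, w_r(p·q) = w_r(p)·w_r(q) for all p, q ∈ F[X], and w_r(p + q) ≤ max(w_r(p), w_r(q)). (For λ ∈ F this yields, after the substitution X ↦ X − λ, the valuation Σ aᵢ(u−λ)ⁱ ↦ max v(aᵢ)·rⁱ defining the generic type of the closed ball of center λ and radius r.) -/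
/-
Write `cₙ(p) = v(aₙ) rⁿ`, so `w_r p = maxₙ cₙ(p)`. The ultrametric inequality for `v`, applied
coefficientwise, gives `w_r (p + q) ≤ max (w_r p) (w_r q)` and `w_r (p q) ≤ w_r p · w_r q`. For
the reverse inequality let `i`, `j` be the least indices with `cᵢ(p) = w_r p` and
`cⱼ(q) = w_r q`. In the coefficient `∑_{k+l=i+j} a_k b_l` of `X^{i+j}` in `p q`, every summand
other than `aᵢ bⱼ` has `k < i` or `l < j`, hence weight `c_k(p) c_l(q) < w_r p · w_r q`; so
`aᵢ bⱼ` dominates the sum and `c_{i+j}(p q) = w_r p · w_r q`.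
-/

open Polynomial

/-- In a linearly ordered commutative group with zero, `0` is a bottom element. -/
noncomputable instance {Γ₀ : Type*} [LinearOrderedCommGroupWithZero Γ₀] : OrderBot Γ₀ where
  bot := 0
  bot_le _ := zero_le'

/-- The Gauss norm of parameter `r`: `w_r (Σ aᵢ Xⁱ) = max_i v(aᵢ)·rⁱ`, the max being taken
over the (finite) support, so that `w_r 0 = 0`. -/
noncomputable def gaussVal {F Γ₀ : Type*} [Field F] [LinearOrderedCommGroupWithZero Γ₀]
    (v : Valuation F Γ₀) (r : Γ₀) (p : F[X]) : Γ₀ :=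
  p.support.sup fun i => v (p.coeff i) * r ^ i

theorem Valuation.map_sum_mul_le {R Γ₀ ι : Type*} [Ring R] [LinearOrderedCommGroupWithZero Γ₀]
    (v : Valuation R Γ₀) {s : Finset ι} {f : ι → R} {c g : Γ₀}
    (hf : ∀ i ∈ s, v (f i) * c ≤ g) : v (∑ i ∈ s, f i) * c ≤ g := by
  rcases eq_or_ne c 0 with rfl | hc
  · simp
  have hc' : 0 < c := zero_lt_iff.mpr hc
  exact (le_div_iff₀ hc').1 (v.map_sum_le fun i hi => (le_div_iff₀ hc').2 (hf i hi))

section GaussVal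

variable {F Γ₀ : Type*} [Field F] [LinearOrderedCommGroupWithZero Γ₀] (v : Valuation F Γ₀) (r : Γ₀)

theorem le_gaussVal (p : F[X]) (n : ℕ) : v (p.coeff n) * r ^ n ≤ gaussVal v r p := by
  by_cases hn : n ∈ p.support
  · exact Finset.le_sup (f := fun i => v (p.coeff i) * r ^ i) hn
  · simp [notMem_support_iff.mp hn]

theorem gaussVal_le_iff {p : F[X]} {g : Γ₀} :
    gaussVal v r p ≤ g ↔ ∀ n, v (p.coeff n) * r ^ n ≤ g :=
  ⟨fun h n => (le_gaussVal v r p n).trans h, fun h => Finset.sup_le fun n _ => h n⟩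

theorem exists_eq_gaussVal (p : F[X]) : ∃ n, v (p.coeff n) * r ^ n = gaussVal v r p := by
  rcases p.support.eq_empty_or_nonempty with hp | hp
  · exact ⟨0, by simp [gaussVal, support_eq_empty.mp hp]; rfl⟩
  · obtain ⟨n, -, hn⟩ := Finset.exists_mem_eq_sup _ hp fun i => v (p.coeff i) * r ^ i
    exact ⟨n, hn.symm⟩

theorem exists_min_eq_gaussVal (p : F[X]) : ∃ n, v (p.coeff n) * r ^ n = gaussVal v r p ∧
    ∀ k < n, v (p.coeff k) * r ^ k < gaussVal v r p := by
  classical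
  have h := exists_eq_gaussVal v r p
  exact ⟨Nat.find h, Nat.find_spec h,
    fun k hk => (le_gaussVal v r p k).lt_of_ne (Nat.find_min h hk)⟩

theorem gaussVal_C (a : F) : gaussVal v r (C a) = v a := by
  rcases eq_or_ne a 0 with rfl | ha
  · simp [gaussVal]; rfl
  · simp [gaussVal, support_C ha]

theorem gaussVal_add_le (p q : F[X]) :
    gaussVal v r (p + q) ≤ max (gaussVal v r p) (gaussVal v r q) := by
  refine (gaussVal_le_iff v r).2 fun n => ?_
  calc v ((p + q).coeff n) * r ^ n
      ≤ max (v (p.coeff n)) (v (q.coeff n)) * r ^ n := by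
        rw [coeff_add]; exact mul_le_mul_left (v.map_add _ _) _
    _ = max (v (p.coeff n) * r ^ n) (v (q.coeff n) * r ^ n) := (max_mul_mul_right _ _ _).symm
    _ ≤ max (gaussVal v r p) (gaussVal v r q) :=
        max_le_max (le_gaussVal v r p n) (le_gaussVal v r q n)

theorem map_coeff_mul_coeff_mul_pow (p q : F[X]) (k l : ℕ) :
    v (p.coeff k * q.coeff l) * r ^ (k + l) = v (p.coeff k) * r ^ k * (v (q.coeff l) * r ^ l) := by
  rw [v.map_mul, pow_add, mul_mul_mul_comm]

theorem gaussVal_mul_le (p q : F[X]) :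
    gaussVal v r (p * q) ≤ gaussVal v r p * gaussVal v r q := by
  refine (gaussVal_le_iff v r).2 fun n => ?_
  rw [coeff_mul]
  refine v.map_sum_mul_le fun x hx => ?_
  rw [← Finset.HasAntidiagonal.mem_antidiagonal.mp hx, map_coeff_mul_coeff_mul_pow]
  exact mul_le_mul' (le_gaussVal v r p _) (le_gaussVal v r q _)

theorem gaussVal_mul_gaussVal_le (p q : F[X]) :
    gaussVal v r p * gaussVal v r q ≤ gaussVal v r (p * q) := by
  classical
  set g := gaussVal v r p * gaussVal v r q
  rcases eq_or_ne g 0 with hg | hg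
  · rw [hg]; exact zero_le
  obtain ⟨hp, hq⟩ := mul_ne_zero_iff.mp hg
  obtain ⟨i, hi, hi_min⟩ := exists_min_eq_gaussVal v r p
  obtain ⟨j, hj, hj_min⟩ := exists_min_eq_gaussVal v r q
  have hij : v (p.coeff i * q.coeff j) * r ^ (i + j) = g := by
    rw [map_coeff_mul_coeff_mul_pow, hi, hj]
  have h_lt : ∀ k l, k + l = i + j → (k, l) ≠ (i, j) →
      v (p.coeff k * q.coeff l) * r ^ (i + j) < g := by
    intro k l hkl hne
    rw [← hkl, map_coeff_mul_coeff_mul_pow]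
    rcases lt_or_ge k i with hk | hk
    · exact mul_lt_mul_of_lt_of_le_of_nonneg_of_pos (hi_min k hk) (le_gaussVal v r q l)
        zero_le (zero_lt_iff.mpr hq)
    · have hl : l < j := by
        by_contra! hl
        exact hne (Prod.ext (by omega) (by omega))
      exact mul_lt_mul_of_le_of_lt_of_nonneg_of_pos (le_gaussVal v r p k) (hj_min l hl)
        zero_le (zero_lt_iff.mpr hp)
  have h_coeff : v ((p * q).coeff (i + j)) = v (p.coeff i * q.coeff j) := by
    rw [coeff_mul]
    refine v.map_sum_eq_of_lt (j := (i, j)) (by simp) fun ⟨k, l⟩ hx => ?_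
    obtain ⟨hkl, hne⟩ : k + l = i + j ∧ (k, l) ≠ (i, j) := by simpa using hx
    exact lt_of_mul_lt_mul_right' ((h_lt k l hkl hne).trans_eq hij.symm)
  calc g = v ((p * q).coeff (i + j)) * r ^ (i + j) := by rw [h_coeff, hij]
    _ ≤ gaussVal v r (p * q) := le_gaussVal v r _ _

theorem gaussVal_mul (p q : F[X]) : gaussVal v r (p * q) = gaussVal v r p * gaussVal v r q :=
  (gaussVal_mul_le v r p q).antisymm (gaussVal_mul_gaussVal_le v r p q)

end GaussVal

/-- `w_r` is a valuation on `F[X]`: it sends `0` to `0` and `1` to `1`, it is multiplicative,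
and it satisfies the ultrametric inequality. -/
theorem gaussVal_isValuation {F Γ₀ : Type*} [Field F] [LinearOrderedCommGroupWithZero Γ₀]
    (v : Valuation F Γ₀) (r : Γ₀) :
    gaussVal v r 0 = 0 ∧ gaussVal v r 1 = 1 ∧
    (∀ p q : F[X], gaussVal v r (p * q) = gaussVal v r p * gaussVal v r q) ∧
    (∀ p q : F[X], gaussVal v r (p + q) ≤ max (gaussVal v r p) (gaussVal v r q)) := by
  refine ⟨?_, ?_, gaussVal_mul v r, gaussVal_add_le v r⟩
  · simpa using gaussVal_C v r 0
  · simpa using gaussVal_C v r 1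
end

section
/- Let k be a field, let A be a finitely generated commutative k-algebra that is an integral domain, and let M be a finitely generated A-module. Then there exists a nonzero element f ∈ A such that the localized module M_f is a free module over the localized ring A_f, where A_f and M_f denote the localizations of A and M at the multiplicative set of powers of f. -/
/-- Generic freeness: if `A` is a finitely generated domain over a field `k` and `M` is a
finitely generated `A`-module, then there is a nonzero `f ∈ A` such that the localization
`M_f` is free over `A_f`. -/
theorem exists_localization_free (k : Type*) [Field k] (A : Type*) [CommRing A] [IsDomain A]
    [Algebra k A] [Algebra.FiniteType k A]
    (M : Type*) [AddCommGroup M] [Module A M] [Module.Finite A M] :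
    ∃ f : A, f ≠ 0 ∧
      Module.Free (Localization.Away f) (LocalizedModule (Submonoid.powers f) M) := by
  have : IsNoetherianRing A := Algebra.FiniteType.isNoetherianRing k A
  have : Module.FinitePresentation A M := Module.finitePresentation_of_finite A M
  let K := FractionRing A
  let S := nonZeroDivisors A
  let MK := LocalizedModule S M
  have : Module.Free K MK := Module.Free.of_divisionRing K MK
  obtain ⟨r, hr, hfree, -⟩ :=
    Module.FinitePresentation.exists_free_localizedModule_powers S
      (LocalizedModule.mkLinearMap S M) K
  exact ⟨r, nonZeroDivisors.ne_zero hr, hfree⟩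
end

section
/- Let k be a nonarchimedean normed field, i.e. a normed field whose norm satisfies ‖x + y‖ ≤ max(‖x‖, ‖y‖). For λ ∈ k and a real number r ≥ 0, define the Gauss seminorm w_{λ,r} on the polynomial ring k[X] by w_{λ,r}(p) = max over i of ‖aᵢ‖·rⁱ, where Σᵢ aᵢ Xⁱ is the expansion of p in powers of X − λ (i.e. the aᵢ are the coefficients of p(X + λ)). Then for all λ, μ ∈ k and all r, s ≥ 0, the functions w_{λ,r} and w_{μ,s} are equal on k[X] if and only if r = s and ‖λ − μ‖ ≤ r. (This is the statement that the generic type η_{λ,r} of the closed ball of center λ and radius r equals η_{μ,s} exactly when the two closed balls coincide.) -/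
open Polynomial

/-- The Gauss seminorm `w_{λ,r}` on `k[X]`: `w_{λ,r}(p) = max_i ‖aᵢ‖ rⁱ` where
`Σ aᵢ Xⁱ` is the expansion of `p` in powers of `X − λ` (so `aᵢ = (p.comp (X + C λ)).coeff i`),
the maximum being taken over the finite support (and `w_{λ,r} 0 = 0`). -/
noncomputable def gaussSeminorm {k : Type*} [NormedField k] (lam : k) (r : ℝ)
    (p : k[X]) : ℝ :=
  ⨆ i : (p.comp (X + C lam)).support,
    ‖(p.comp (X + C lam)).coeff i‖ * r ^ (i : ℕ)

/-- Auxiliary: the Gauss norm over all of `ℕ`. -/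
noncomputable def gaussAux {k : Type*} [NormedField k] (r : ℝ) (q : k[X]) : ℝ :=
  ⨆ i : ℕ, ‖q.coeff i‖ * r ^ i

section aux

variable {k : Type*} [NormedField k]

lemma gaussAux_bdd (r : ℝ) (q : k[X]) :
    BddAbove (Set.range fun i : ℕ => ‖q.coeff i‖ * r ^ i) := by
  apply Set.Finite.bddAbove
  apply Set.Finite.subset (((Set.finite_Icc 0 q.natDegree).image
    fun i => ‖q.coeff i‖ * r ^ i).insert 0)
  rintro x ⟨i, rfl⟩
  by_cases h : i ≤ q.natDegree
  · exact Set.mem_insert_of_mem _ ⟨i, ⟨Nat.zero_le _, h⟩, rfl⟩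
  · simp only [Set.mem_insert_iff]
    left
    simp [coeff_eq_zero_of_natDegree_lt (by omega : q.natDegree < i)]

lemma le_gaussAux (r : ℝ) (q : k[X]) (i : ℕ) :
    ‖q.coeff i‖ * r ^ i ≤ gaussAux r q :=
  le_ciSup (gaussAux_bdd r q) i

lemma gaussAux_nonneg (r : ℝ) (q : k[X]) : 0 ≤ gaussAux r q :=
  le_trans (by simpa using norm_nonneg (q.coeff 0)) (le_gaussAux r q 0)

lemma gaussSeminorm_eq_gaussAux (lam : k) (r : ℝ) (hr : 0 ≤ r) (p : k[X]) :
    gaussSeminorm lam r p = gaussAux r (p.comp (X + C lam)) := by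
  set q := p.comp (X + C lam) with hq
  rw [gaussSeminorm, gaussAux, ← hq]
  rcases q.support.eq_empty_or_nonempty with h | h
  · rw [support_eq_empty] at h
    simp [h, Real.iSup_of_isEmpty, ciSup_const]
  · have hbdd : BddAbove (Set.range fun i : q.support => ‖q.coeff i‖ * r ^ (i : ℕ)) :=
      (Set.finite_range _).bddAbove
    have hne : Nonempty q.support := h.to_subtype
    apply le_antisymm
    · exact ciSup_le fun i => le_gaussAux r q i
    · refine ciSup_le fun i => ?_
      by_cases hi : i ∈ q.support
      · exact le_ciSup hbdd (⟨i, hi⟩ : q.support)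
      · have : q.coeff i = 0 := notMem_support_iff.mp hi
        rw [this]
        simp only [norm_zero, zero_mul]
        obtain ⟨j, hj⟩ := h
        exact le_trans (mul_nonneg (norm_nonneg _) (pow_nonneg hr _))
          (le_ciSup hbdd (⟨j, hj⟩ : q.support))

lemma gaussAux_comp_le [IsUltrametricDist k] {r : ℝ} (hr : 0 ≤ r) {c : k} (hc : ‖c‖ ≤ r)
    (q : k[X]) : gaussAux r (q.comp (X + C c)) ≤ gaussAux r q := by
  rcases hr.eq_or_lt with h | hrpos
  · have hc0 : c = 0 := by
      have := le_trans hc h.symm.le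
      simpa using le_antisymm this (norm_nonneg c)
    simp [hc0]
  refine ciSup_le fun i => ?_
  rw [← le_div_iff₀ (pow_pos hrpos i)]
  have hco : (q.comp (X + C c)).coeff i =
      ∑ j ∈ q.support, q.coeff j * ((X + C c) ^ j).coeff i := by
    rw [comp_eq_sum_left, Polynomial.sum_def, finset_sum_coeff]
    simp [coeff_C_mul]
  rw [hco]
  refine IsUltrametricDist.norm_sum_le_of_forall_le_of_nonneg
    (div_nonneg (gaussAux_nonneg r q) (pow_nonneg hr i)) fun j _ => ?_
  rw [coeff_X_add_C_pow]
  by_cases hij : i ≤ j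
  · have h1 : ‖q.coeff j * (c ^ (j - i) * (j.choose i : k))‖
        ≤ ‖q.coeff j‖ * r ^ (j - i) := by
      rw [norm_mul, norm_mul]
      have h2 : ‖c ^ (j - i)‖ * ‖(j.choose i : k)‖ ≤ r ^ (j - i) * 1 := by
        apply mul_le_mul _ (IsUltrametricDist.norm_natCast_le_one k _)
          (norm_nonneg _) (pow_nonneg hr _)
        rw [norm_pow]
        exact pow_le_pow_left₀ (norm_nonneg c) hc _
      calc ‖q.coeff j‖ * (‖c ^ (j - i)‖ * ‖(j.choose i : k)‖)
          ≤ ‖q.coeff j‖ * (r ^ (j - i) * 1) :=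
            mul_le_mul_of_nonneg_left h2 (norm_nonneg _)
        _ = ‖q.coeff j‖ * r ^ (j - i) := by ring
    refine h1.trans ?_
    have h3 : ‖q.coeff j‖ * r ^ (j - i) = ‖q.coeff j‖ * r ^ j / r ^ i := by
      rw [pow_sub₀ r (ne_of_gt hrpos) hij]
      ring
    rw [h3]
    gcongr
    exact le_gaussAux r q j
  · have : j.choose i = 0 := Nat.choose_eq_zero_of_lt (by omega)
    rw [this]
    simp only [Nat.cast_zero, mul_zero, norm_zero]
    exact div_nonneg (gaussAux_nonneg r q) (pow_nonneg hr i)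

lemma gaussAux_comp_eq [IsUltrametricDist k] {r : ℝ} (hr : 0 ≤ r) {c : k} (hc : ‖c‖ ≤ r)
    (q : k[X]) : gaussAux r (q.comp (X + C c)) = gaussAux r q := by
  refine le_antisymm (gaussAux_comp_le hr hc q) ?_
  have hc' : ‖-c‖ ≤ r := by rwa [norm_neg]
  have := gaussAux_comp_le hr hc' (q.comp (X + C c))
  have hcomp : ((q.comp (X + C c)).comp (X + C (-c))) = q := by
    rw [comp_assoc]
    have : (X + C c).comp (X + C (-c)) = X := by
      simp [add_comp, map_neg]
    rw [this, comp_X]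
  rwa [hcomp] at this

lemma gaussAux_X (r : ℝ) (hr : 0 ≤ r) : gaussAux r (X : k[X]) = r := by
  apply le_antisymm
  · refine ciSup_le fun i => ?_
    rcases eq_or_ne i 1 with h | h
    · simp [h]
    · rw [coeff_X, if_neg (Ne.symm h)]
      simpa using hr
  · simpa using le_gaussAux r (X : k[X]) 1

lemma le_gaussAux_X_add_C_one (r : ℝ) (a : k) :
    r ≤ gaussAux r (X + C a) := by
  have := le_gaussAux r (X + C a) 1
  simpa using this

lemma le_gaussAux_X_add_C_zero (r : ℝ) (a : k) :
    ‖a‖ ≤ gaussAux r (X + C a) := by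
  have := le_gaussAux r (X + C a) 0
  simpa using this

lemma gaussAux_X_add_C_le (r : ℝ) (hr : 0 ≤ r) (a : k) (ha : ‖a‖ ≤ r) :
    gaussAux r (X + C a) ≤ r := by
  refine ciSup_le fun i => ?_
  match i with
  | 0 => simpa using ha
  | 1 => simp
  | (n + 2) => simp [coeff_X, coeff_C]; positivity

end aux

/-- Two Gauss seminorms on `k[X]` coincide iff the corresponding closed balls coincide:
`w_{λ,r} = w_{μ,s}` iff `r = s` and `‖λ − μ‖ ≤ r`. -/
theorem gaussSeminorm_eq_iff {k : Type*} [NormedField k] [IsUltrametricDist k]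
    (lam mu : k) (r s : ℝ) (hr : 0 ≤ r) (hs : 0 ≤ s) :
    (∀ p : k[X], gaussSeminorm lam r p = gaussSeminorm mu s p) ↔
      (r = s ∧ ‖lam - mu‖ ≤ r) := by
  constructor
  · intro H
    have h1 := H (X - C lam)
    have h2 := H (X - C mu)
    rw [gaussSeminorm_eq_gaussAux lam r hr, gaussSeminorm_eq_gaussAux mu s hs] at h1 h2
    have e1 : (X - C lam).comp (X + C lam) = (X : k[X]) := by
      simp [sub_comp, add_comp]
    have e2 : (X - C lam).comp (X + C mu) = X + C (mu - lam) := by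
      simp [sub_comp, add_comp, map_sub]; ring
    have e3 : (X - C mu).comp (X + C lam) = X + C (lam - mu) := by
      simp [sub_comp, add_comp, map_sub]; ring
    have e4 : (X - C mu).comp (X + C mu) = (X : k[X]) := by
      simp [sub_comp, add_comp]
    rw [e1, e2, gaussAux_X r hr] at h1
    rw [e3, e4, gaussAux_X s hs] at h2
    have hsr : s ≤ r := h1 ▸ le_gaussAux_X_add_C_one s (mu - lam)
    have hml : ‖mu - lam‖ ≤ r := h1 ▸ le_gaussAux_X_add_C_zero s (mu - lam)
    have hrs : r ≤ s := h2 ▸ le_gaussAux_X_add_C_one r (lam - mu)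
    refine ⟨le_antisymm hrs hsr, ?_⟩
    rwa [← norm_neg, neg_sub]
  · rintro ⟨rfl, hle⟩
    intro p
    rw [gaussSeminorm_eq_gaussAux lam r hr, gaussSeminorm_eq_gaussAux mu r hr]
    have hcomp : p.comp (X + C mu) = (p.comp (X + C lam)).comp (X + C (mu - lam)) := by
      rw [comp_assoc]
      congr 1
      simp [add_comp, map_sub]
      ring
    rw [hcomp]
    have hc : ‖mu - lam‖ ≤ r := by rwa [← norm_neg, neg_sub]
    exact (gaussAux_comp_eq hr hc _).symm
end
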